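/- Let u ∈ C_b(ℝⁿ) and let C : ℝⁿ → ℝⁿ be a C¹ vector field whose derivative DC is bounded and uniformly continuous on ℝⁿ. Define R_{m,1}(x) = ∫_{ℝⁿ} u(y) div C(y) ρ_m(x−y) dy and R_{m,2}(x) = ∫_{ℝⁿ} u(y) ⟨C(x) − C(y), Dρ_m(x−y)⟩ dy. Then, as m → ∞, R_{m,1} converges uniformly on ℝⁿ to the function x ↦ u(x) div C(x), and R_{m,2} converges uniformly on ℝⁿ to the function x ↦ −u(x) div C(x); in particular R_{m,1} + R_{m,2} → 0 uniformly on ℝⁿ. -/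

import Mathlib

/-!
`R_{m,1}` is the convolution of the uniformly continuous function `u · div C` with the
approximate identity `ρ_m`, hence converges to it uniformly. For `R_{m,2}`, integration by parts
gives `∫ Dρ_m(z) (A z) dz = -tr A` for every linear map `A`; with `A = DC(x)` this writes
`R_{m,2}(x) + u(x) div C(x)` as the integral of `Dρ_m(x - y)` against
`u(y) (C(x) - C(y)) - u(x) DC(x) (x - y)`, which is `o(|x - y|)` uniformly in `x` because `u` and
`DC` are uniformly continuous and bounded. Since `∫ |z| |Dρ_m(z)| dz` does not depend on `m`, the
integral tends to `0` uniformly.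
-/

open MeasureTheory

noncomputable section

/-- `ℝⁿ` as a Euclidean space. -/
abbrev En (n : ℕ) := EuclideanSpace ℝ (Fin n)

/-- The `i`-th canonical basis vector of `ℝⁿ`. -/
def evec (n : ℕ) (i : Fin n) : En n := EuclideanSpace.single i 1

/-- `C_b(ℝⁿ)`: uniformly continuous and bounded. -/
def IsCb (n : ℕ) (f : En n → ℝ) : Prop :=
  UniformContinuous f ∧ ∃ M, ∀ x, |f x| ≤ M

/-- The mollifiers `ρ_m(x) = mⁿ ρ(m x)`. -/
def mollifier (n : ℕ) (ρ : En n → ℝ) (m : ℕ) (x : En n) : ℝ :=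
  (m : ℝ) ^ n * ρ ((m : ℝ) • x)

/-- The divergence `div C = Σ_i D_i C_i`. -/
def divg (n : ℕ) (C : En n → En n) (x : En n) : ℝ :=
  ∑ i, (fderiv ℝ C x (evec n i)) i

/-- `R_{m,1}(x) = ∫ u(y) div C(y) ρ_m(x−y) dy`. -/
def Rm1 (n : ℕ) (u : En n → ℝ) (C : En n → En n) (ρ : En n → ℝ) (m : ℕ) (x : En n) : ℝ :=
  ∫ y, u y * divg n C y * mollifier n ρ m (x - y)

/-- `R_{m,2}(x) = ∫ u(y) ⟨C(x) − C(y), Dρ_m(x−y)⟩ dy`. -/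
def Rm2 (n : ℕ) (u : En n → ℝ) (C : En n → En n) (ρ : En n → ℝ) (m : ℕ) (x : En n) : ℝ :=
  ∫ y, u y * fderiv ℝ (mollifier n ρ m) (x - y) (C x - C y)

open Filter Metric Set

theorem uniformContinuous_mul_of_isBounded {α : Type*} [UniformSpace α] {f g : α → ℝ}
    (hf : UniformContinuous f) (hg : UniformContinuous g)
    (hfb : Bornology.IsBounded (range f)) (hgb : Bornology.IsBounded (range g)) :
    UniformContinuous fun x => f x * g x := by
  have hmul : UniformContinuousOn (fun p : ℝ × ℝ => p.1 * p.2) (range f ×ˢ range g) :=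
    (hfb.prod hgb).uniformContinuousOn_smul
  rw [← uniformContinuousOn_univ]
  exact hmul.comp (hf.prodMk hg).uniformContinuousOn
    fun x _ => ⟨mem_range_self x, mem_range_self x⟩

def traceCLM (E : Type*) [NormedAddCommGroup E] [NormedSpace ℝ E] [FiniteDimensional ℝ E] :
    (E →L[ℝ] E) →L[ℝ] ℝ :=
  LinearMap.toContinuousLinearMap ((LinearMap.trace ℝ E).comp (ContinuousLinearMap.coeLM ℝ))

@[simp]
theorem traceCLM_apply {E : Type*} [NormedAddCommGroup E] [NormedSpace ℝ E]
    [FiniteDimensional ℝ E] (A : E →L[ℝ] E) : traceCLM E A = LinearMap.trace ℝ E A :=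
  rfl

section IntegrationByParts

variable {E : Type*} [NormedAddCommGroup E] [InnerProductSpace ℝ E] [FiniteDimensional ℝ E]
  [MeasurableSpace E] [BorelSpace E] {μ : Measure E} [μ.IsAddHaarMeasure]

theorem integral_fderiv_apply_eq_neg_traceCLM_mul {ψ : E → ℝ} (hψ : ContDiff ℝ 1 ψ)
    (hψc : HasCompactSupport ψ) (A : E →L[ℝ] E) :
    ∫ z, fderiv ℝ ψ z (A z) ∂μ = -(traceCLM E A * ∫ z, ψ z ∂μ) := by
  let b := stdOrthonormalBasis ℝ E
  have hdiff : Differentiable ℝ ψ := hψ.differentiable one_ne_zero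
  have hint : ∀ (v : E) {h : E → ℝ}, Continuous h → Integrable (fun z => fderiv ℝ ψ z v * h z) μ :=
    fun v _ hh => (((hψ.continuous_fderiv one_ne_zero).clm_apply continuous_const).mul
      hh).integrable_of_hasCompactSupport (hψc.fderiv_apply ℝ v).mul_right
  have hterm : ∀ i, ∫ z, fderiv ℝ ψ z (b i) * inner ℝ (b i) (A z) ∂μ
      = -(inner ℝ (b i) (A (b i)) * ∫ z, ψ z ∂μ) := by
    intro i
    let g : E →L[ℝ] ℝ := (innerSL ℝ (b i)).comp A
    have hparts := integral_mul_fderiv_eq_neg_fderiv_mul_of_integrable (μ := μ) (f := ψ) (g := g)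
      (v := b i) (hint _ g.continuous) ?_ ?_ (fun z _ => hdiff z) (fun z _ => g.differentiableAt)
    · simp only [ContinuousLinearMap.fderiv, integral_mul_const] at hparts
      change ∫ z, fderiv ℝ ψ z (b i) * g z ∂μ = -(g (b i) * ∫ z, ψ z ∂μ)
      linarith
    · simp only [ContinuousLinearMap.fderiv]
      exact (hψ.continuous.mul continuous_const).integrable_of_hasCompactSupport hψc.mul_right
    · exact (hψ.continuous.mul g.continuous).integrable_of_hasCompactSupport hψc.mul_right
  have hsum : ∀ z, fderiv ℝ ψ z (A z) = ∑ i, fderiv ℝ ψ z (b i) * inner ℝ (b i) (A z) := by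
    intro z
    conv_lhs => rw [← b.sum_repr' (A z)]
    simp [mul_comm]
  simp_rw [hsum]
  rw [integral_finsetSum _ fun i _ => hint (b i) (continuous_const.inner A.continuous)]
  simp_rw [hterm, traceCLM_apply, LinearMap.trace_eq_sum_inner _ b, Finset.sum_mul,
    Finset.sum_neg_distrib]
  rfl

end IntegrationByParts

section Taylor

variable {E F : Type*} [NormedAddCommGroup E] [NormedSpace ℝ E] [NormedAddCommGroup F]
  [NormedSpace ℝ F]

theorem exists_pos_norm_smul_sub_smul_fderiv_le {u : E → ℝ} {C : E → F} {Mu M : ℝ}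
    (hu : UniformContinuous u) (hMu : ∀ x, |u x| ≤ Mu) (hC : Differentiable ℝ C)
    (hM : ∀ x, ‖fderiv ℝ C x‖ ≤ M) (hCu : UniformContinuous (fderiv ℝ C)) {η : ℝ} (hη : 0 < η) :
    ∃ δ > 0, ∀ x y, ‖x - y‖ < δ →
      ‖u y • (C x - C y) - u x • fderiv ℝ C x (x - y)‖ ≤ η * ‖x - y‖ := by
  have hMu0 : 0 ≤ Mu := (abs_nonneg _).trans (hMu 0)
  have hM0 : 0 ≤ M := (norm_nonneg _).trans (hM 0)
  set s := η / (Mu + M + 1) with hs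
  have hs0 : 0 < s := by positivity
  obtain ⟨δ₁, hδ₁, hu'⟩ := Metric.uniformContinuous_iff.1 hu s hs0
  obtain ⟨δ₂, hδ₂, hC'⟩ := Metric.uniformContinuous_iff.1 hCu s hs0
  refine ⟨min δ₁ δ₂, lt_min hδ₁ hδ₂, fun x y hxy => ?_⟩
  set A := fderiv ℝ C x
  have hu_near : |u y - u x| ≤ s := by
    rw [← Real.dist_eq]
    exact (hu' (by rw [dist_eq_norm, norm_sub_rev]; exact hxy.trans_le (min_le_left _ _))).le
  have hC_near : ‖C y - C x - A (y - x)‖ ≤ s * ‖y - x‖ := by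
    refine (convex_ball x (min δ₁ δ₂)).norm_image_sub_le_of_norm_fderiv_le'
      (fun z _ => hC z) (fun z hz => ?_) (mem_ball_self (lt_min hδ₁ hδ₂)) ?_
    · rw [← dist_eq_norm]
      exact (hC' ((mem_ball.1 hz).trans_le (min_le_right _ _))).le
    · rwa [mem_ball, dist_eq_norm, norm_sub_rev]
  have hsplit : u y • (C x - C y) - u x • A (x - y)
      = -(u y • (C y - C x - A (y - x))) + (u y - u x) • A (x - y) := by
    rw [← neg_sub y x, map_neg]
    module
  calc ‖u y • (C x - C y) - u x • A (x - y)‖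
      ≤ |u y| * ‖C y - C x - A (y - x)‖ + |u y - u x| * ‖A (x - y)‖ := by
        rw [hsplit]
        refine (norm_add_le _ _).trans ?_
        rw [norm_neg, norm_smul, norm_smul, Real.norm_eq_abs, Real.norm_eq_abs]
    _ ≤ Mu * (s * ‖x - y‖) + s * (M * ‖x - y‖) := by
        rw [norm_sub_rev y x] at hC_near
        gcongr
        · exact hMu y
        · exact A.le_of_opNorm_le (hM x) _
    _ = (Mu + M) * s * ‖x - y‖ := by ring
    _ ≤ (Mu + M + 1) * s * ‖x - y‖ := by gcongr ?_ * s * ‖x - y‖; linarith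
    _ = η * ‖x - y‖ := by rw [hs, mul_div_cancel₀ η (by positivity)]

end Taylor

section Mollifier

variable {n : ℕ} {ρ : En n → ℝ}

theorem integral_pow_mul_comp_smul (g : En n → ℝ) {c : ℝ} (hc : 0 < c) :
    ∫ z, c ^ n * g (c • z) = ∫ z, g z := by
  rw [integral_const_mul, Measure.integral_comp_smul_of_nonneg volume g c (hR := hc.le),
    finrank_euclideanSpace_fin, smul_eq_mul, mul_inv_cancel_left₀ (by positivity)]

theorem mollifier_nonneg (hρ : ∀ x, 0 ≤ ρ x) (m : ℕ) (z : En n) : 0 ≤ mollifier n ρ m z :=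
  mul_nonneg (by positivity) (hρ _)

theorem integral_mollifier {m : ℕ} (hρ : ∫ x, ρ x = 1) (hm : m ≠ 0) : ∫ z, mollifier n ρ m z = 1 :=
  (integral_pow_mul_comp_smul ρ (Nat.cast_pos.2 (Nat.pos_of_ne_zero hm))).trans hρ

theorem support_mollifier_subset {m : ℕ} (hρ : ∀ x : En n, 1 ≤ ‖x‖ → ρ x = 0) (hm : m ≠ 0) :
    Function.support (mollifier n ρ m) ⊆ ball 0 (m : ℝ)⁻¹ := by
  have hm' : (0 : ℝ) < m := Nat.cast_pos.2 (Nat.pos_of_ne_zero hm)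
  intro z hz
  rw [mem_ball_zero_iff]
  by_contra! h
  have : 1 ≤ ‖(m : ℝ) • z‖ := by
    rwa [norm_smul, Real.norm_of_nonneg hm'.le, ← inv_le_iff_one_le_mul₀' hm']
  exact hz (by rw [mollifier, hρ _ this, mul_zero])

theorem tsupport_mollifier_subset {m : ℕ} (hρ : ∀ x : En n, 1 ≤ ‖x‖ → ρ x = 0) (hm : m ≠ 0) :
    tsupport (mollifier n ρ m) ⊆ closedBall 0 (m : ℝ)⁻¹ :=
  closure_minimal ((support_mollifier_subset hρ hm).trans ball_subset_closedBall)
    isClosed_closedBall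

theorem hasCompactSupport_mollifier {m : ℕ} (hρ : ∀ x : En n, 1 ≤ ‖x‖ → ρ x = 0) (hm : m ≠ 0) :
    HasCompactSupport (mollifier n ρ m) :=
  HasCompactSupport.of_support_subset_isCompact (isCompact_closedBall 0 (m : ℝ)⁻¹)
    ((support_mollifier_subset hρ hm).trans ball_subset_closedBall)

theorem contDiff_mollifier {k : WithTop ℕ∞} (hρ : ContDiff ℝ k ρ) (m : ℕ) :
    ContDiff ℝ k (mollifier n ρ m) :=
  contDiff_const.mul (hρ.comp (contDiff_const_smul _))

theorem fderiv_mollifier (hρ : Differentiable ℝ ρ) (m : ℕ) (z : En n) :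
    fderiv ℝ (mollifier n ρ m) z = ((m : ℝ) ^ (n + 1)) • fderiv ℝ ρ ((m : ℝ) • z) := by
  have h := ((hρ _).hasFDerivAt.comp z ((hasFDerivAt_id z).const_smul (m : ℝ))).const_mul
    ((m : ℝ) ^ n)
  refine HasFDerivAt.fderiv (h.congr_fderiv ?_)
  ext v
  simp [pow_succ, mul_assoc, mul_left_comm]

theorem integral_norm_mul_norm_fderiv_mollifier {m : ℕ} (hρ : Differentiable ℝ ρ) (hm : m ≠ 0) :
    ∫ z, ‖z‖ * ‖fderiv ℝ (mollifier n ρ m) z‖ = ∫ w, ‖w‖ * ‖fderiv ℝ ρ w‖ := by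
  have hm' : (0 : ℝ) < m := Nat.cast_pos.2 (Nat.pos_of_ne_zero hm)
  rw [← integral_pow_mul_comp_smul (fun w => ‖w‖ * ‖fderiv ℝ ρ w‖) hm']
  congr 1 with z
  rw [fderiv_mollifier hρ, norm_smul, norm_smul, Real.norm_of_nonneg hm'.le,
    Real.norm_of_nonneg (by positivity)]
  ring

theorem tendstoUniformly_integral_mul_mollifier {g : En n → ℝ} (hg : UniformContinuous g)
    (hρ : ∀ x, 0 ≤ ρ x) (hρint : ∫ x, ρ x = 1) (hρ0 : ∀ x : En n, 1 ≤ ‖x‖ → ρ x = 0) :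
    TendstoUniformly (fun m x => ∫ y, g y * mollifier n ρ m (x - y)) g atTop := by
  rw [Metric.tendstoUniformly_iff]
  intro ε hε
  obtain ⟨δ, hδ, hgδ⟩ := Metric.uniformContinuous_iff.1 hg (ε / 2) (half_pos hε)
  filter_upwards [eventually_ne_atTop 0,
    tendsto_inv_atTop_nhds_zero_nat.eventually (gt_mem_nhds hδ)] with m hm hmδ x
  have h := dist_convolution_le (μ := volume) (x₀ := x) (half_pos hε).le
    (support_mollifier_subset hρ0 hm) (mollifier_nonneg hρ m) (integral_mollifier hρint hm)
    hg.continuous.aestronglyMeasurable fun y hy => (hgδ ((mem_ball.1 hy).trans hmδ)).le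
  rw [convolution_lsmul_swap] at h
  simp only [smul_eq_mul, mul_comm (mollifier n ρ m _)] at h
  rw [dist_comm]
  linarith

end Mollifier

section Divergence

variable {n : ℕ} {C : En n → En n}

theorem divg_eq_traceCLM (C : En n → En n) : divg n C = traceCLM (En n) ∘ fderiv ℝ C := by
  ext x
  rw [Function.comp_apply, traceCLM_apply,
    LinearMap.trace_eq_sum_inner _ (EuclideanSpace.basisFun (Fin n) ℝ)]
  simp [divg, evec, EuclideanSpace.inner_single_left]

theorem uniformContinuous_divg (hCu : UniformContinuous (fderiv ℝ C)) :
    UniformContinuous (divg n C) := by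
  rw [divg_eq_traceCLM]
  exact (traceCLM (En n)).uniformContinuous.comp hCu

theorem isBounded_range_divg {M : ℝ} (hM : ∀ x, ‖fderiv ℝ C x‖ ≤ M) :
    Bornology.IsBounded (range (divg n C)) := by
  rw [divg_eq_traceCLM, range_comp]
  exact (traceCLM (En n)).lipschitz.isBounded_image
    (isBounded_iff_forall_norm_le.2 ⟨M, forall_mem_range.2 hM⟩)

end Divergence

section Commutator

variable {n : ℕ} {u : En n → ℝ} {C : En n → En n} {ρ : En n → ℝ}

theorem Rm2_add_eq_integral {m : ℕ} (hu : Continuous u) (hC : Continuous C) (hρ : ContDiff ℝ 1 ρ)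
    (hρint : ∫ x, ρ x = 1) (hρ0 : ∀ x : En n, 1 ≤ ‖x‖ → ρ x = 0) (hm : m ≠ 0) (x : En n) :
    Rm2 n u C ρ m x + u x * divg n C x = ∫ y, fderiv ℝ (mollifier n ρ m) (x - y)
      (u y • (C x - C y) - u x • fderiv ℝ C x (x - y)) := by
  set D := fderiv ℝ (mollifier n ρ m)
  set A := fderiv ℝ C x
  have hcs := hasCompactSupport_mollifier hρ0 hm
  have hint : ∀ {v : En n → En n}, Continuous v → Integrable fun y => D (x - y) (v y) := by
    intro v hv
    refine (((contDiff_mollifier hρ m).continuous_fderiv one_ne_zero).comp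
      (continuous_sub_left x) |>.clm_apply hv).integrable_of_hasCompactSupport ?_
    refine ((hcs.fderiv ℝ).comp_homeomorph (Homeomorph.subLeft x)).mono fun y hy h0 => hy ?_
    simp_all
  have hA : ∫ y, D (x - y) (A (x - y)) = -divg n C x := by
    rw [integral_sub_left_eq_self (fun z => D z (A z)),
      integral_fderiv_apply_eq_neg_traceCLM_mul (contDiff_mollifier hρ m) hcs,
      integral_mollifier hρint hm, mul_one, divg_eq_traceCLM, Function.comp_apply]
  have hsplit : ∀ y, D (x - y) (u y • (C x - C y) - u x • A (x - y))
      = D (x - y) (u y • (C x - C y)) - D (x - y) (u x • A (x - y)) := fun y => map_sub _ _ _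
  rw [integral_congr_ae (Eventually.of_forall hsplit),
    integral_sub (hint (v := fun y => u y • (C x - C y)) (by fun_prop))
    (hint (v := fun y => u x • A (x - y)) (by fun_prop))]
  simp only [Rm2, map_smul, smul_eq_mul, integral_const_mul, hA]
  ring

theorem tendstoUniformly_Rm2 {Mu M : ℝ} (hu : UniformContinuous u) (hMu : ∀ x, |u x| ≤ Mu)
    (hC : Differentiable ℝ C) (hM : ∀ x, ‖fderiv ℝ C x‖ ≤ M)
    (hCu : UniformContinuous (fderiv ℝ C)) (hρ : ContDiff ℝ 1 ρ) (hρint : ∫ x, ρ x = 1)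
    (hρ0 : ∀ x : En n, 1 ≤ ‖x‖ → ρ x = 0) :
    TendstoUniformly (fun m => Rm2 n u C ρ m) (fun x => -(u x * divg n C x)) atTop := by
  set K := ∫ w, ‖w‖ * ‖fderiv ℝ ρ w‖
  have hK : 0 ≤ K := integral_nonneg fun w => by positivity
  rw [Metric.tendstoUniformly_iff]
  intro ε hε
  set η := ε / (K + 1)
  obtain ⟨δ, hδ, hTaylor⟩ :=
    exists_pos_norm_smul_sub_smul_fderiv_le hu hMu hC hM hCu (η := η) (by positivity)
  filter_upwards [eventually_ne_atTop 0,
    tendsto_inv_atTop_nhds_zero_nat.eventually (gt_mem_nhds hδ)] with m hm hmδ x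
  set D := fderiv ℝ (mollifier n ρ m)
  have hbound : ∀ y, ‖D (x - y) (u y • (C x - C y) - u x • fderiv ℝ C x (x - y))‖
      ≤ η * (‖x - y‖ * ‖D (x - y)‖) := by
    intro y
    by_cases h0 : D (x - y) = 0
    · simp [h0]
    have hxy : ‖x - y‖ < δ := by
      have := tsupport_mollifier_subset hρ0 hm (support_fderiv_subset ℝ h0)
      exact (mem_closedBall_zero_iff.1 this).trans_lt hmδ
    calc _ ≤ ‖D (x - y)‖ * (η * ‖x - y‖) := (D (x - y)).le_of_opNorm_le le_rfl _ |>.trans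
            (mul_le_mul_of_nonneg_left (hTaylor x y hxy) (norm_nonneg _))
      _ = η * (‖x - y‖ * ‖D (x - y)‖) := by ring
  have hint : Integrable fun y => η * (‖x - y‖ * ‖D (x - y)‖) := by
    refine ((continuous_norm.mul ((contDiff_mollifier hρ m).continuous_fderiv
      one_ne_zero).norm).integrable_of_hasCompactSupport ?_).comp_sub_left x |>.const_mul η
    exact ((hasCompactSupport_mollifier hρ0 hm).fderiv ℝ).norm.mul_left
  rw [dist_eq_norm, neg_sub_left, norm_neg,
    Rm2_add_eq_integral hu.continuous hC.continuous hρ hρint hρ0 hm]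
  calc _ ≤ ∫ y, η * (‖x - y‖ * ‖D (x - y)‖) :=
        norm_integral_le_of_norm_le hint (Eventually.of_forall hbound)
    _ = η * K := by
        rw [integral_const_mul, integral_sub_left_eq_self (fun z => ‖z‖ * ‖D z‖),
          integral_norm_mul_norm_fderiv_mollifier (hρ.differentiable one_ne_zero) hm]
    _ < η * (K + 1) := by gcongr; linarith
    _ = ε := div_mul_cancel₀ ε (by positivity)

end Commutator

theorem stmt12_general (n : ℕ) (u : En n → ℝ) (hu : IsCb n u)
    (C : En n → En n) (hC : ContDiff ℝ 1 C)
    (hCb : ∃ M, ∀ x, ‖fderiv ℝ C x‖ ≤ M) (hCu : UniformContinuous (fderiv ℝ C))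
    (ρ : En n → ℝ) (hρs : ContDiff ℝ (⊤ : ℕ∞) ρ)
    (hρ01 : ∀ x, 0 ≤ ρ x ∧ ρ x ≤ 1) (hρint : (∫ x, ρ x) = 1)
    (hρ0 : ∀ x : En n, 1 ≤ ‖x‖ → ρ x = 0) :
    TendstoUniformly (fun m => Rm1 n u C ρ m) (fun x => u x * divg n C x) Filter.atTop ∧
    TendstoUniformly (fun m => Rm2 n u C ρ m) (fun x => -(u x * divg n C x)) Filter.atTop ∧
    TendstoUniformly (fun m x => Rm1 n u C ρ m x + Rm2 n u C ρ m x) (fun _ => 0)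
      Filter.atTop := by
  obtain ⟨huc, Mu, hMu⟩ := hu
  obtain ⟨M, hM⟩ := hCb
  have hub : Bornology.IsBounded (range u) :=
    isBounded_iff_forall_norm_le.2 ⟨Mu, forall_mem_range.2 hMu⟩
  have h₁ : TendstoUniformly (fun m => Rm1 n u C ρ m) (fun x => u x * divg n C x) atTop :=
    tendstoUniformly_integral_mul_mollifier
      (uniformContinuous_mul_of_isBounded huc (uniformContinuous_divg hCu) hub
        (isBounded_range_divg hM))
      (fun x => (hρ01 x).1) hρint hρ0
  have h₂ := tendstoUniformly_Rm2 huc hMu (hC.differentiable one_ne_zero) hM hCu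
    (hρs.of_le (mod_cast le_top)) hρint hρ0
  refine ⟨h₁, h₂, ?_⟩
  simpa [Pi.add_def] using h₁.add h₂

/-- For `u ∈ C_b(ℝⁿ)` and a `C¹` vector field `C` with bounded and
uniformly continuous derivative, the mollified quantities `R_{m,1}` converge uniformly on
`ℝⁿ` to `u · div C`, `R_{m,2}` converge uniformly to `−u · div C`, and in particular
`R_{m,1} + R_{m,2} → 0` uniformly on `ℝⁿ`. -/
theorem stmt12 (n : ℕ) (hn : 1 ≤ n) (u : En n → ℝ) (hu : IsCb n u)
    (C : En n → En n) (hC : ContDiff ℝ 1 C)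
    (hCb : ∃ M, ∀ x, ‖fderiv ℝ C x‖ ≤ M) (hCu : UniformContinuous (fderiv ℝ C))
    (ρ : En n → ℝ) (hρs : ContDiff ℝ (⊤ : ℕ∞) ρ) (hρc : HasCompactSupport ρ)
    (hρ01 : ∀ x, 0 ≤ ρ x ∧ ρ x ≤ 1) (hρint : (∫ x, ρ x) = 1)
    (hρ0 : ∀ x : En n, 1 ≤ ‖x‖ → ρ x = 0) :
    TendstoUniformly (fun m => Rm1 n u C ρ m) (fun x => u x * divg n C x) Filter.atTop ∧
    TendstoUniformly (fun m => Rm2 n u C ρ m) (fun x => -(u x * divg n C x)) Filter.atTop ∧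
    TendstoUniformly (fun m x => Rm1 n u C ρ m x + Rm2 n u C ρ m x) (fun _ => 0)
      Filter.atTop :=
  stmt12_general n u hu C hC hCb hCu ρ hρs hρ01 hρint hρ0

end
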